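/- arXiv:1003.5409 — 2 statements merged into one kernel-verified Lean document; each statement's English description precedes it below -/
import Mathlib

section
/- The group reflexion of the Sorgenfrey line 𝕃 is the real line with its usual topology; that is, the strongest group topology on ℝ weaker than the Sorgenfrey topology is the Euclidean topology. -/
/-!
A neighbourhood of `0` in a group topology coarser than the Sorgenfrey topology contains some
`[0, ε)`; being invariant under negation, it then also contains `(-ε, 0]`, hence is a Euclidean
neighbourhood of `0`. Group topologies are determined by their neighbourhoods of `0`.
-/

open Topology Filter

/-- The Sorgenfrey topology on the real line, generated by half-open intervals `[a, b)`. -/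
def sorgenfrey : TopologicalSpace ℝ :=
  TopologicalSpace.generateFrom {s : Set ℝ | ∃ a b : ℝ, a < b ∧ s = Set.Ico a b}

theorem IsTopologicalAddGroup.le_of_nhds_zero_le {G : Type*} [AddGroup G]
    {t t' : TopologicalSpace G} (tg : @IsTopologicalAddGroup G t _)
    (tg' : @IsTopologicalAddGroup G t' _) (h : @nhds G t 0 ≤ @nhds G t' 0) : t ≤ t' :=
  (le_iff_nhds _ _).2 fun x ↦ by
    rw [← @nhds_translation_add_neg G t _ tg x, ← @nhds_translation_add_neg G t' _ tg' x]
    exact comap_mono h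

theorem nhds_zero_le_of_nhdsGE_le_of_comap_neg_eq {α : Type*} [TopologicalSpace α]
    [AddCommGroup α] [LinearOrder α] [IsOrderedAddMonoid α] [ContinuousNeg α] {F : Filter α}
    (hGE : 𝓝[≥] (0 : α) ≤ F) (hF : comap Neg.neg F = F) : 𝓝 (0 : α) ≤ F := by
  have hLE : 𝓝[≤] (0 : α) ≤ F :=
    calc 𝓝[≤] (0 : α) ≤ comap Neg.neg (𝓝[≥] 0) := by
          simpa only [neg_zero] using (tendsto_neg_nhdsLE (a := (0 : α))).le_comap
      _ ≤ comap Neg.neg F := comap_mono hGE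
      _ = F := hF
  rw [← nhdsLE_sup_nhdsGE]
  exact sup_le hLE hGE

theorem sorgenfrey_nhds (x : ℝ) : @nhds ℝ sorgenfrey x = 𝓝[≥] x := by
  rw [sorgenfrey, TopologicalSpace.nhds_generateFrom]
  apply le_antisymm
  · refine (nhdsGE_basis_Ico x).ge_iff.2 fun u hu ↦ ?_
    exact mem_iInf_of_mem _ (mem_iInf_of_mem ⟨⟨le_rfl, hu⟩, x, u, hu, rfl⟩ (mem_principal_self _))
  · refine le_iInf₂ fun s ⟨hx, a, b, _, hs⟩ ↦ ?_
    subst hs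
    exact le_principal_iff.2 (Ico_mem_nhdsGE_of_mem hx)

theorem sorgenfrey_le : sorgenfrey ≤ (inferInstance : TopologicalSpace ℝ) :=
  (le_iff_nhds _ _).2 fun x ↦ (sorgenfrey_nhds x).trans_le nhdsWithin_le_nhds

/-- The group reflexion of the Sorgenfrey line is the real line with its usual topology:
the Euclidean topology is the least element (i.e., the strongest topology) among all group
topologies on `ℝ` weaker than the Sorgenfrey topology.  (In Mathlib `τ ≤ t` means `τ` is
finer than `t`.) -/
theorem stmt_5 :
    IsLeast {t : TopologicalSpace ℝ | sorgenfrey ≤ t ∧ @IsTopologicalAddGroup ℝ t _}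
      (inferInstance : TopologicalSpace ℝ) := by
  -- `t` below becomes a local instance, so the Euclidean facts are fixed before introducing it.
  have hℝ : IsTopologicalAddGroup ℝ := inferInstance
  have nhds_zero_le (F : Filter ℝ) := nhds_zero_le_of_nhdsGE_le_of_comap_neg_eq (F := F)
  refine ⟨⟨sorgenfrey_le, hℝ⟩, fun t ⟨hst, ht⟩ ↦ hℝ.le_of_nhds_zero_le ht (nhds_zero_le _ ?_ ?_)⟩
  · exact (sorgenfrey_nhds 0).symm.trans_le ((le_iff_nhds _ _).1 hst 0)
  · exact @nhds_zero_symm ℝ t _ ht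
end

section
/- Let G be a ♭-separated, ♭-regular paratopological group and H a normal subgroup that is locally compact as a subspace of the group reflexion G♭. Then the quotient paratopological group G/H is ♭-regular: it has a neighborhood base at the identity consisting of sets that are closed in the group reflexion topology of G/H. -/
open Topology

/-- The group reflexion topology `τ♭`: the strongest group topology on `G` weaker than `τ`. -/
def flatTop (G : Type*) [Group G] (τ : TopologicalSpace G) : TopologicalSpace G :=
  sInf {t : TopologicalSpace G | τ ≤ t ∧ @IsTopologicalGroup G t _}

/-!
If `H` is locally compact in `G♭`, some compact `D ⊆ H` contains `H ∩ N` for a neighbourhood `N`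
of `1`. For a `G♭`-closed `V` inside a small enough neighbourhood of `1`, the points of `V * H`
near any `g` then all lie in a single right translate `V * D * h₀`, which is closed as the product
of a closed and a compact set; hence `V * H` is `G♭`-closed, i.e. the image of `V` is closed in the
quotient of `τ♭`. That quotient is a group topology coarser than the quotient of `τ`, hence
coarser than `(G ⧸ H)♭`. The `τ♭`-closed neighbourhoods given by ♭-regularity of `G` therefore
map to a base of `(G ⧸ H)♭`-closed neighbourhoods of `1` in `G ⧸ H`.
-/

open Set Filter
open scoped Pointwise

theorem exists_isCompact_superset_inter_nhds {X : Type*} [TopologicalSpace X] {S : Set X}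
    [WeaklyLocallyCompactSpace S] {x : X} (hx : x ∈ S) :
    ∃ D ⊆ S, IsCompact D ∧ ∃ N ∈ 𝓝 x, S ∩ N ⊆ D := by
  obtain ⟨s, hs, hsx⟩ := exists_compact_mem_nhds (⟨x, hx⟩ : S)
  obtain ⟨N, hN, hNs⟩ := (mem_nhds_subtype S _ _).1 hsx
  refine ⟨(↑) '' s, Subtype.coe_image_subset S s, hs.image continuous_subtype_val, N, hN, ?_⟩
  rintro y ⟨hyS, hyN⟩
  exact ⟨⟨y, hyS⟩, hNs hyN, rfl⟩

section TopologicalGroup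

variable {G : Type*} [Group G] [TopologicalSpace G] [IsTopologicalGroup G]

theorem isClosed_mul_subgroup_of_inter_nhds_subset_isCompact {H : Subgroup G} {D N Q V : Set G}
    (hD : IsCompact D) (hDH : D ⊆ H) (hHN : (H : Set G) ∩ N ⊆ D) (hQ : Q ∈ 𝓝 1)
    (hV : IsClosed V) (hVQN : V⁻¹ * Q * Q⁻¹ * V ⊆ N) : IsClosed (V * (H : Set G)) := by
  refine isClosed_of_closure_subset fun g hg => ?_
  set W := (· * g⁻¹) ⁻¹' Q
  have hW : W ∈ 𝓝 g :=
    (continuous_mul_const g⁻¹).continuousAt.preimage_mem_nhds (by rwa [mul_inv_cancel])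
  have hgW : g ∈ closure (V * (H : Set G) ∩ W) := by
    rw [mem_closure_iff_nhdsWithin_neBot, nhdsWithin_inter_of_mem' (mem_nhdsWithin_of_mem_nhds hW)]
    exact mem_closure_iff_nhdsWithin_neBot.1 hg
  obtain ⟨_, ⟨v₀, hv₀, h₀, hh₀, rfl⟩, hx₀W⟩ := closure_nonempty_iff.1 ⟨g, hgW⟩
  have hsub : V * (H : Set G) ∩ W ⊆ V * ((· * h₀) '' D) := by
    rintro _ ⟨⟨v, hv, h, hh, rfl⟩, hxW⟩
    -- `h * h₀⁻¹ = v⁻¹ * (v * h * g⁻¹) * (v₀ * h₀ * g⁻¹)⁻¹ * v₀`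
    have hN : h * h₀⁻¹ ∈ N := by
      have := hVQN (mul_mem_mul (mul_mem_mul (mul_mem_mul (inv_mem_inv.2 hv) hxW)
        (inv_mem_inv.2 hx₀W)) hv₀)
      convert this using 1
      group
    exact ⟨v, hv, h, ⟨h * h₀⁻¹, hHN ⟨H.mul_mem hh (H.inv_mem hh₀), hN⟩, by group⟩, rfl⟩
  have hK : IsClosed (V * ((· * h₀) '' D)) :=
    hV.mul_right_of_isCompact (hD.image (continuous_mul_const h₀))
  have hKH : V * ((· * h₀) '' D) ⊆ V * (H : Set G) :=
    mul_subset_mul_left (by rintro _ ⟨d, hd, rfl⟩; exact H.mul_mem (hDH hd) hh₀)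
  exact hKH (hK.closure_subset_iff.2 hsub hgW)

theorem Subgroup.exists_nhds_one_isClosed_mul (H : Subgroup G) [WeaklyLocallyCompactSpace H] :
    ∃ Q ∈ 𝓝 (1 : G), ∀ V ⊆ Q, IsClosed V → IsClosed (V * (H : Set G)) := by
  obtain ⟨D, hDH, hD, N, hN, hHN⟩ := exists_isCompact_superset_inter_nhds H.one_mem
  obtain ⟨Q, hQ, hQN⟩ := exists_nhds_one_split4 hN
  have hQ' : Q ∩ Q⁻¹ ∈ 𝓝 (1 : G) := inter_mem hQ (inv_mem_nhds_one G hQ)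
  refine ⟨Q ∩ Q⁻¹, hQ', fun V hVQ hV =>
    isClosed_mul_subgroup_of_inter_nhds_subset_isCompact hD hDH hHN hQ' hV ?_⟩
  rintro _ ⟨_, ⟨_, ⟨a, ha, b, hb, rfl⟩, c, hc, rfl⟩, d, hd, rfl⟩
  exact hQN (by simpa using (hVQ ha).2) hb.1 (by simpa using hc.2) (hVQ hd).1

end TopologicalGroup

section Reflexion

variable {G : Type*} [Group G] [τ : TopologicalSpace G]

theorem le_flatTop : τ ≤ flatTop G τ := le_sInf fun _ ht => ht.1

theorem isTopologicalGroup_flatTop : @IsTopologicalGroup G (flatTop G τ) _ :=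
  topologicalGroup_sInf fun _ ht => ht.2

theorem flatTop_le {t : TopologicalSpace G} (hτt : τ ≤ t) (ht : @IsTopologicalGroup G t _) :
    flatTop G τ ≤ t :=
  sInf_le ⟨hτt, ht⟩

theorem flatTop_quotient_le_coinduced (H : Subgroup G) [H.Normal] :
    flatTop (G ⧸ H) inferInstance ≤ (flatTop G τ).coinduced (↑) :=
  flatTop_le (coinduced_mono le_flatTop) <| by
    let _ := flatTop G τ
    have := isTopologicalGroup_flatTop (τ := τ)
    exact QuotientGroup.instIsTopologicalGroup H

theorem isClosed_flatTop_image_mk {H : Subgroup G} [H.Normal] {V : Set G}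
    (hV : IsClosed[flatTop G τ] (V * (H : Set G))) :
    IsClosed[flatTop (G ⧸ H) inferInstance] ((↑) '' V : Set (G ⧸ H)) :=
  IsClosed.mono (by rwa [isClosed_coinduced, QuotientGroup.preimage_image_mk_eq_mul])
    (flatTop_quotient_le_coinduced H)

end Reflexion

theorem stmt_11_general {G : Type*} [Group G] [τ : TopologicalSpace G] [ContinuousMul G]
    (H : Subgroup G) [H.Normal]
    (hreg : ∀ U ∈ nhds (1 : G), ∃ V ∈ nhds (1 : G), V ⊆ U ∧ IsClosed[flatTop G τ] V)
    (hlc : @LocallyCompactSpace H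
      (TopologicalSpace.induced (Subtype.val : H → G) (flatTop G τ))) :
    ∀ U ∈ nhds (1 : G ⧸ H), ∃ V ∈ nhds (1 : G ⧸ H), V ⊆ U ∧
      IsClosed[flatTop (G ⧸ H) (inferInstance : TopologicalSpace (G ⧸ H))] V := by
  intro U hU
  obtain ⟨Q, hQ, hQV⟩ := @Subgroup.exists_nhds_one_isClosed_mul G _ (flatTop G τ)
    isTopologicalGroup_flatTop H inferInstance
  have hUG : (↑) ⁻¹' U ∈ 𝓝 (1 : G) :=
    QuotientGroup.continuous_mk.continuousAt.preimage_mem_nhds (by rwa [QuotientGroup.mk_one])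
  obtain ⟨V, hV, hVUQ, hVcl⟩ := hreg _ (inter_mem hUG (nhds_mono le_flatTop hQ))
  refine ⟨(↑) '' V, by
    rw [← QuotientGroup.mk_one]; exact QuotientGroup.isOpenMap_coe.image_mem_nhds hV,
    image_subset_iff.2 fun _ hx => (hVUQ hx).1, isClosed_flatTop_image_mk ?_⟩
  exact hQV V (fun _ hx => (hVUQ hx).2) hVcl

/-- Let `G` be a ♭-separated, ♭-regular paratopological group and `H` a normal subgroup that
is locally compact as a subspace of the group reflexion `G♭`.  Then the quotient
paratopological group `G/H` is ♭-regular: it has a neighborhood base at the identity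
consisting of sets closed in the group reflexion topology of `G/H`. -/
theorem stmt_11 {G : Type*} [Group G] [τ : TopologicalSpace G] [ContinuousMul G]
    (H : Subgroup G) [H.Normal]
    (hsep : @T2Space G (flatTop G τ))
    (hreg : ∀ U ∈ nhds (1 : G), ∃ V ∈ nhds (1 : G), V ⊆ U ∧ IsClosed[flatTop G τ] V)
    (hlc : @LocallyCompactSpace H
      (TopologicalSpace.induced (Subtype.val : H → G) (flatTop G τ))) :
    ∀ U ∈ nhds (1 : G ⧸ H), ∃ V ∈ nhds (1 : G ⧸ H), V ⊆ U ∧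
      IsClosed[flatTop (G ⧸ H) (inferInstance : TopologicalSpace (G ⧸ H))] V :=
  stmt_11_general (τ := τ) H hreg hlc
end
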